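/- Let j ≥ 1 and k ≥ 0 be integers, and let a_k^{(n)} (k, n ≥ 0) be complex numbers. Suppose there are nonzero complex numbers r_1, …, r_j with |r_1| > |r_2| > … > |r_j|, and that for each k' ∈ {k, k+1, …, k+j−1} there are nonzero complex constants c_{1,k'}, …, c_{j,k'}, reals ρ_{k'} with 0 < ρ_{k'} < |r_j| and μ_{k'} > 0, and a sequence (b_{k'}^{(n)})_{n≥0} with |b_{k'}^{(n)}| ≤ μ_{k'} ρ_{k'}^n, such that a_{k'}^{(n)} = Σ_{ℓ=1}^{j} c_{ℓ,k'} r_ℓ^{n+k'+1} + b_{k'}^{(n)} for all n ≥ 0. Define the constant c_{k,j} := Σ_{κ ∈ {1,…,j}^j} det M_κ, where M_κ is the j×j matrix whose (s, ℓ) entry, for s = 0, …, j−1 and ℓ = 1, …, j, is c_{κ_ℓ, k+ℓ−1} r_{κ_ℓ}^{k+ℓ+s}. Then there exists a constant K > 0 such that for all n ≥ 0, |C_{k,j}^{(n)} − c_{k,j} (r_1 r_2 ⋯ r_j)^n| ≤ K |r_1 r_2 ⋯ r_j|^n Σ_{ℓ=1}^{j} (ρ_{k+ℓ−1}/|r_j|)^n.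 -/

import Mathlib

/-- The Casorati determinant: `C_{k,0}^{(n)} = 1` and for `j ≥ 1`,
`C_{k,j}^{(n)} = det (a_{k+ℓ}^{(n+s)})_{s,ℓ = 0,…,j-1}`. -/
noncomputable def casorati (a : ℕ → ℕ → ℂ) (k j n : ℕ) : ℂ :=
  Matrix.det (Matrix.of fun s ℓ : Fin j => a (k + (ℓ : ℕ)) (n + (s : ℕ)))

/-!
Transposed, row `ℓ` of the Casorati matrix is `∑ᵢ Cℓᵢ (rᵢ^(n+s))ₛ + (b_{k+ℓ}^(n+s))ₛ` with
`Cℓᵢ = c_{i,k+ℓ} rᵢ^(k+ℓ+1)`. Expanding the determinant multilinearly in the rows gives one term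
for each way of choosing, in every row, either a pole `rᵢ` or the remainder `b`. The choices
using only poles add up to `det (C · diag(rᵢⁿ) · V) = det (C V) (r₁⋯r_j)ⁿ`, `V` the Vandermonde
matrix of the poles. A choice using the same pole in two rows has two proportional rows and
vanishes. Every other choice takes the remainder in some row `ℓ₀` and distinct poles elsewhere:
extending these poles to a permutation and using `ρ ≤ |r_j| ≤ |rᵢ|`, the growth rates of its
rows multiply to at most `|r₁⋯r_j| ρ_{ℓ₀} / |r_j|`, and dividing each row by its rate leaves
entries bounded independently of `n`.
-/

open Finset Matrix

namespace Matrix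

variable {n R : Type*} [Fintype n] [DecidableEq n]

theorem det_of_sum_rows [CommRing R] {α : Type*} [Fintype α] (g : n → α → n → R) :
    det (of fun i k => ∑ a, g i a k) = ∑ φ : n → α, det (of fun i k => g i (φ i) k) := by
  have h : (of fun i k => ∑ a, g i a k) = fun i => ∑ a, g i a := by
    ext i k
    simp [Finset.sum_apply]
  rw [h]
  exact (detRowAlternating : (n → R) [⋀^n]→ₗ[R] R).toMultilinearMap.map_sum g

theorem norm_det_le_permanent_mul_prod [NormedCommRing R] [NormOneClass R] (M : Matrix n n R)
    (B : Matrix n n ℝ) (w : n → ℝ) (h : ∀ i k, ‖M i k‖ ≤ B i k * w i) :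
    ‖M.det‖ ≤ B.permanent * ∏ i, w i := by
  rw [det_apply', permanent, Finset.sum_mul]
  refine (norm_sum_le _ _).trans (Finset.sum_le_sum fun σ _ => ?_)
  have hsign : ‖((Equiv.Perm.sign σ : ℤ) : R)‖ = 1 := by
    rcases Int.units_eq_one_or (Equiv.Perm.sign σ) with hs | hs <;> simp [hs]
  calc ‖((Equiv.Perm.sign σ : ℤ) : R) * ∏ i, M (σ i) i‖ ≤ ‖∏ i, M (σ i) i‖ :=
        (norm_mul_le _ _).trans_eq (by rw [hsign, one_mul])
    _ ≤ ∏ i, ‖M (σ i) i‖ := Finset.norm_prod_le _ _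
    _ ≤ ∏ i, (B (σ i) i * w (σ i)) :=
        Finset.prod_le_prod (fun _ _ => norm_nonneg _) fun i _ => h _ _
    _ = (∏ i, B (σ i) i) * ∏ i, w i := by rw [Finset.prod_mul_distrib, Equiv.prod_comp σ w]

end Matrix

theorem Finset.prod_le_mul_prod_of_le {ι R : Type*} [Fintype ι] [CommSemiring R] [PartialOrder R]
    [IsOrderedRing R] {f g : ι → R} (hf : ∀ i, 0 ≤ f i) (hfg : ∀ i, f i ≤ g i) {i₀ : ι} {q : R}
    (hq : f i₀ ≤ q * g i₀) : ∏ i, f i ≤ q * ∏ i, g i := by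
  classical
  rw [← Finset.mul_prod_erase _ f (mem_univ i₀), ← Finset.mul_prod_erase _ g (mem_univ i₀),
    ← mul_assoc]
  exact mul_le_mul hq (Finset.prod_le_prod (fun i _ => hf i) fun i _ => hfg i)
    (Finset.prod_nonneg fun i _ => hf i) ((hf i₀).trans hq)

theorem Equiv.Perm.exists_extend_of_injective_on_some {ι : Type*} [Fintype ι] (φ : ι → Option ι)
    (hφ : ∀ i i' a, φ i = some a → φ i' = some a → i = i') :
    ∃ σ : Equiv.Perm ι, ∀ i a, φ i = some a → σ i = a := by
  classical
  have hinj : Set.InjOn (fun i => (φ i).getD i) {i | (φ i).isSome} := by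
    intro i hi i' hi' h
    obtain ⟨a, ha⟩ := Option.isSome_iff_exists.mp hi
    obtain ⟨a', ha'⟩ := Option.isSome_iff_exists.mp hi'
    simp only [ha, ha', Option.getD_some] at h
    exact hφ i i' a ha (h ▸ ha')
  obtain ⟨g, hg⟩ :=
    Set.MapsTo.exists_equiv_extend_of_card_eq (t := univ) (by simp) (fun _ _ => by simp) hinj
  refine ⟨g.trans (Equiv.subtypeUnivEquiv mem_univ), fun i a hi => ?_⟩
  simpa [hi] using hg i (by simp [hi])

theorem Fintype.sum_fun_option {ι α M : Type*} [Fintype ι] [DecidableEq ι] [Fintype α]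
    [AddCommMonoid M] [DecidablePred fun φ : ι → Option α => ∃ i, φ i = none]
    (f : (ι → Option α) → M) :
    ∑ φ, f φ = ∑ κ : ι → α, f (fun i => some (κ i)) + ∑ φ with ∃ i, φ i = none, f φ := by
  rw [← sum_filter_not_add_sum_filter univ (fun φ : ι → Option α => ∃ i, φ i = none)]
  congr 1
  symm
  refine Finset.sum_bij (fun κ _ i => some (κ i)) (fun κ _ => by simp) ?_ ?_ (fun _ _ => rfl)
  · intro κ _ κ' _ h
    funext i
    exact Option.some_injective _ (congrFun h i)
  · intro φ hφ
    simp only [mem_filter, mem_univ, true_and, not_exists] at hφ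
    choose κ hκ using fun i => Option.ne_none_iff_exists'.mp (hφ i)
    exact ⟨κ, mem_univ _, funext fun i => (hκ i).symm⟩

theorem prod_option_elim_le_div_mul_prod {ι : Type*} [Fintype ι] {w ρ : ι → ℝ} {R : ℝ} (hR : 0 < R)
    (hw : ∀ i, R ≤ w i) (hρ0 : ∀ i, 0 ≤ ρ i) (hρR : ∀ i, ρ i ≤ R) (φ : ι → Option ι)
    (hφ : ∀ i i' a, φ i = some a → φ i' = some a → i = i') {i₀ : ι} (hi₀ : φ i₀ = none) :
    ∏ i, (φ i).elim (ρ i) w ≤ ρ i₀ / R * ∏ i, w i := by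
  obtain ⟨σ, hσ⟩ := Equiv.Perm.exists_extend_of_injective_on_some φ hφ
  rw [← Equiv.prod_comp σ w]
  have hle : ∀ i, (φ i).elim (ρ i) w ≤ w (σ i) := fun i => by
    cases h : φ i with
    | none => exact (hρR i).trans (hw _)
    | some a => simp [hσ i a h]
  refine Finset.prod_le_mul_prod_of_le (fun i => ?_) hle (i₀ := i₀) ?_
  · cases φ i with
    | none => exact hρ0 i
    | some a => exact hR.le.trans (hw a)
  · calc (φ i₀).elim (ρ i₀) w = ρ i₀ / R * R := by rw [hi₀]; exact (div_mul_cancel₀ _ hR.ne').symm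
      _ ≤ ρ i₀ / R * w (σ i₀) := by gcongr; exacts [div_nonneg (hρ0 i₀) hR.le, hw _]

section ShiftedExponentialSums

variable {j : ℕ} (C : Matrix (Fin j) (Fin j) ℂ) (r : Fin j → ℂ) (β : Fin j → ℕ → ℂ)

def rowSummand (n : ℕ) (ℓ : Fin j) : Option (Fin j) → Fin j → ℂ
  | some i, s => C ℓ i * r i ^ (n + s)
  | none, s => β ℓ (n + s)

theorem det_shifted_eq_sum_det_rowSummand (n : ℕ) :
    det (of fun ℓ s : Fin j => β ℓ (n + s) + ∑ i, C ℓ i * r i ^ (n + s)) =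
      ∑ φ : Fin j → Option (Fin j), det (of fun ℓ s => rowSummand C r β n ℓ (φ ℓ) s) := by
  rw [← det_of_sum_rows]
  simp [Fintype.sum_option, rowSummand]

theorem det_shifted_exponential_sum (n : ℕ) :
    det (of fun ℓ s : Fin j => ∑ i, C ℓ i * r i ^ (n + s)) =
      det (C * vandermonde r) * (∏ i, r i) ^ n := by
  have h : (of fun ℓ s : Fin j => ∑ i, C ℓ i * r i ^ (n + s)) =
      C * (diagonal (fun i => r i ^ n) * vandermonde r) := by
    ext ℓ s
    simp only [of_apply, mul_apply (M := C), diagonal_mul, vandermonde_apply, pow_add]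
  rw [h, det_mul, det_mul, det_mul, det_diagonal, prod_pow]
  ring

theorem det_mul_vandermonde :
    det (C * vandermonde r) =
      ∑ κ : Fin j → Fin j, det (of fun ℓ s => C ℓ (κ ℓ) * r (κ ℓ) ^ (s : ℕ)) := by
  rw [← det_of_sum_rows fun ℓ i s => C ℓ i * r i ^ (s : ℕ)]
  rfl

theorem sum_det_rowSummand_some (n : ℕ) :
    ∑ κ : Fin j → Fin j, det (of fun ℓ s => rowSummand C r β n ℓ (some (κ ℓ)) s) =
      det (C * vandermonde r) * (∏ i, r i) ^ n := by
  rw [← det_shifted_exponential_sum, det_of_sum_rows]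
  rfl

theorem det_rowSummand_eq_zero {n : ℕ} {φ : Fin j → Option (Fin j)} {ℓ ℓ' : Fin j} (hne : ℓ ≠ ℓ')
    {i : Fin j} (hℓ : φ ℓ = some i) (hℓ' : φ ℓ' = some i) :
    det (of fun ℓ s => rowSummand C r β n ℓ (φ ℓ) s) = 0 := by
  let N : Matrix (Fin j) (Fin j) ℂ :=
    of fun ℓ s => (φ ℓ).elim (β ℓ (n + s)) fun i => r i ^ (n + s)
  have h : (of fun ℓ s => rowSummand C r β n ℓ (φ ℓ) s) =
      of fun ℓ s => (φ ℓ).elim 1 (C ℓ) * N ℓ s := by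
    ext ℓ s
    cases h : φ ℓ <;> simp [rowSummand, N, h]
  rw [h, det_mul_column, det_zero_of_row_eq hne (by ext s; simp [N, hℓ, hℓ']), mul_zero]

variable {C r β} {ρ μ : Fin j → ℝ}

noncomputable def rowSummandBound (C : Matrix (Fin j) (Fin j) ℂ) (r : Fin j → ℂ) (ρ μ : Fin j → ℝ)
    (φ : Fin j → Option (Fin j)) : Matrix (Fin j) (Fin j) ℝ :=
  of fun ℓ s => (φ ℓ).elim (μ ℓ * ρ ℓ ^ (s : ℕ)) fun i => ‖C ℓ i‖ * ‖r i‖ ^ (s : ℕ)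

theorem permanent_rowSummandBound_nonneg (hρ0 : ∀ ℓ, 0 ≤ ρ ℓ)
    (hβ : ∀ ℓ m, ‖β ℓ m‖ ≤ μ ℓ * ρ ℓ ^ m) (φ : Fin j → Option (Fin j)) :
    0 ≤ (rowSummandBound C r ρ μ φ).permanent := by
  refine sum_nonneg fun σ _ => prod_nonneg fun ℓ _ => ?_
  cases h : φ (σ ℓ) with
  | none =>
    have hμ : 0 ≤ μ (σ ℓ) := by simpa using (norm_nonneg _).trans (hβ (σ ℓ) 0)
    simpa [rowSummandBound, h] using mul_nonneg hμ (pow_nonneg (hρ0 _) _)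
  | some i =>
    simp only [rowSummandBound, of_apply, h, Option.elim]
    positivity

theorem norm_det_rowSummand_le (hβ : ∀ ℓ m, ‖β ℓ m‖ ≤ μ ℓ * ρ ℓ ^ m) (n : ℕ)
    (φ : Fin j → Option (Fin j)) :
    ‖det (of fun ℓ s => rowSummand C r β n ℓ (φ ℓ) s)‖ ≤
      (rowSummandBound C r ρ μ φ).permanent * (∏ ℓ, (φ ℓ).elim (ρ ℓ) fun i => ‖r i‖) ^ n := by
  rw [← prod_pow]
  refine norm_det_le_permanent_mul_prod _ _ _ fun ℓ s => ?_
  cases h : φ ℓ with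
  | none =>
    simp only [rowSummand, rowSummandBound, of_apply, h, Option.elim]
    exact (hβ ℓ (n + s)).trans_eq (by ring)
  | some i =>
    simp only [rowSummand, rowSummandBound, of_apply, h, Option.elim]
    rw [norm_mul, norm_pow, pow_add]
    exact le_of_eq (by ring)

theorem norm_det_rowSummand_le_of_eq_none {R : ℝ} (hR : 0 < R) (hRr : ∀ i, R ≤ ‖r i‖)
    (hρ0 : ∀ ℓ, 0 ≤ ρ ℓ) (hρR : ∀ ℓ, ρ ℓ ≤ R) (hβ : ∀ ℓ m, ‖β ℓ m‖ ≤ μ ℓ * ρ ℓ ^ m) (n : ℕ)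
    {φ : Fin j → Option (Fin j)} {ℓ₀ : Fin j} (hℓ₀ : φ ℓ₀ = none) :
    ‖det (of fun ℓ s => rowSummand C r β n ℓ (φ ℓ) s)‖ ≤
      (rowSummandBound C r ρ μ φ).permanent * (‖∏ i, r i‖ ^ n * ∑ ℓ, (ρ ℓ / R) ^ n) := by
  have hB := permanent_rowSummandBound_nonneg (C := C) (r := r) hρ0 hβ φ
  by_cases hφ : ∀ ℓ ℓ' i, φ ℓ = some i → φ ℓ' = some i → ℓ = ℓ'
  · refine (norm_det_rowSummand_le hβ n φ).trans (mul_le_mul_of_nonneg_left ?_ hB)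
    calc (∏ ℓ, (φ ℓ).elim (ρ ℓ) fun i => ‖r i‖) ^ n ≤ (ρ ℓ₀ / R * ∏ i, ‖r i‖) ^ n := by
          gcongr
          · exact prod_nonneg fun ℓ _ => by cases φ ℓ <;> simp [hρ0]
          · exact prod_option_elim_le_div_mul_prod hR hRr hρ0 hρR φ hφ hℓ₀
      _ = ‖∏ i, r i‖ ^ n * (ρ ℓ₀ / R) ^ n := by rw [norm_prod, mul_pow, mul_comm]
      _ ≤ ‖∏ i, r i‖ ^ n * ∑ ℓ, (ρ ℓ / R) ^ n := by
          gcongr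
          exact single_le_sum (f := fun ℓ => (ρ ℓ / R) ^ n)
            (fun ℓ _ => by have := hρ0 ℓ; positivity) (mem_univ ℓ₀)
  · push Not at hφ
    obtain ⟨ℓ, ℓ', i, hℓ, hℓ', hne⟩ := hφ
    rw [det_rowSummand_eq_zero C r β hne hℓ hℓ', norm_zero]
    exact mul_nonneg hB (mul_nonneg (by positivity) (sum_nonneg fun ℓ _ => by
      have := hρ0 ℓ; positivity))

theorem exists_norm_det_shifted_sub_le {R : ℝ} (hR : 0 < R) (hRr : ∀ i, R ≤ ‖r i‖)
    (hρ0 : ∀ ℓ, 0 ≤ ρ ℓ) (hρR : ∀ ℓ, ρ ℓ ≤ R) (hβ : ∀ ℓ m, ‖β ℓ m‖ ≤ μ ℓ * ρ ℓ ^ m) :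
    ∃ K > 0, ∀ n, ‖det (of fun ℓ s : Fin j => β ℓ (n + s) + ∑ i, C ℓ i * r i ^ (n + s)) -
        det (C * vandermonde r) * (∏ i, r i) ^ n‖ ≤ K * ‖∏ i, r i‖ ^ n * ∑ ℓ, (ρ ℓ / R) ^ n := by
  have hB := permanent_rowSummandBound_nonneg (C := C) (r := r) hρ0 hβ
  refine ⟨∑ φ, (rowSummandBound C r ρ μ φ).permanent + 1,
    by linarith [sum_nonneg fun φ (_ : φ ∈ univ) => hB φ], fun n => ?_⟩
  have hE : 0 ≤ ‖∏ i, r i‖ ^ n * ∑ ℓ, (ρ ℓ / R) ^ n :=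
    mul_nonneg (by positivity) (sum_nonneg fun ℓ _ => by have := hρ0 ℓ; positivity)
  rw [det_shifted_eq_sum_det_rowSummand, Fintype.sum_fun_option, sum_det_rowSummand_some,
    add_sub_cancel_left]
  refine (norm_sum_le _ _).trans <| (sum_le_sum fun φ hφ => ?_).trans <|
    (sum_le_univ_sum_of_nonneg (f := fun φ => (rowSummandBound C r ρ μ φ).permanent *
      (‖∏ i, r i‖ ^ n * ∑ ℓ, (ρ ℓ / R) ^ n)) fun φ => mul_nonneg (hB φ) hE).trans ?_
  · obtain ⟨ℓ₀, hℓ₀⟩ := (mem_filter.mp hφ).2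
    exact norm_det_rowSummand_le_of_eq_none hR hRr hρ0 hρR hβ n hℓ₀
  · rw [← sum_mul, mul_assoc]
    exact mul_le_mul_of_nonneg_right (lt_add_one _).le hE

end ShiftedExponentialSums

theorem casorati_asymptotic_restricted
    (j k : ℕ) (hj : 1 ≤ j)
    (a b : ℕ → ℕ → ℂ)
    (r : Fin j → ℂ) (c : ℕ → Fin j → ℂ) (ρ μ : ℕ → ℝ)
    (hrdec : ∀ ℓ₁ ℓ₂ : Fin j, ℓ₁ < ℓ₂ → ‖r ℓ₂‖ < ‖r ℓ₁‖)
    (hρpos : ∀ d < j, 0 < ρ (k + d))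
    (hρlt : ∀ d < j, ρ (k + d) < ‖r ⟨j - 1, by omega⟩‖)
    (hb : ∀ d < j, ∀ n : ℕ, ‖b (k + d) n‖ ≤ μ (k + d) * ρ (k + d) ^ n)
    (ha : ∀ d < j, ∀ n : ℕ,
      a (k + d) n = (∑ ℓ, c (k + d) ℓ * r ℓ ^ (n + (k + d) + 1)) + b (k + d) n) :
    ∃ K > 0, ∀ n : ℕ,
      ‖casorati a k j n -
        (∑ κ : Fin j → Fin j,
          Matrix.det (Matrix.of fun s ℓ : Fin j =>
            c (k + (ℓ : ℕ)) (κ ℓ) * r (κ ℓ) ^ (k + (ℓ : ℕ) + 1 + (s : ℕ)))) *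
          (∏ ℓ : Fin j, r ℓ) ^ n‖ ≤
      K * ‖∏ ℓ : Fin j, r ℓ‖ ^ n *
        ∑ ℓ : Fin j, (ρ (k + (ℓ : ℕ)) / ‖r ⟨j - 1, by omega⟩‖) ^ n := by
  have hRr : ∀ i, ‖r ⟨j - 1, by omega⟩‖ ≤ ‖r i‖ := fun i => by
    rcases (show i ≤ ⟨j - 1, by omega⟩ from Fin.mk_le_mk.mpr (by omega)).eq_or_lt with h | h
    · rw [h]
    · exact (hrdec i _ h).le
  let C : Matrix (Fin j) (Fin j) ℂ := of fun ℓ i => c (k + ℓ) i * r i ^ (k + ℓ + 1)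
  obtain ⟨K, hK, hbound⟩ := exists_norm_det_shifted_sub_le (C := C) (β := fun ℓ m => b (k + ℓ) m)
    ((hρpos 0 (by omega)).trans (hρlt 0 (by omega))) hRr (fun ℓ => (hρpos ℓ ℓ.isLt).le)
    (fun ℓ => (hρlt ℓ ℓ.isLt).le) (fun ℓ => hb ℓ ℓ.isLt)
  refine ⟨K, hK, fun n => ?_⟩
  have hcasorati : casorati a k j n =
      det (of fun ℓ s : Fin j => b (k + ℓ) (n + s) + ∑ i, C ℓ i * r i ^ (n + s)) := by
    rw [casorati, ← det_transpose]
    congr 1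
    ext ℓ s
    simp only [transpose_apply, of_apply, ha ℓ ℓ.isLt, C]
    rw [add_comm]
    congr 1
    exact sum_congr rfl fun i _ => by ring
  have hcoef : ∑ κ : Fin j → Fin j, det (of fun s ℓ : Fin j =>
      c (k + (ℓ : ℕ)) (κ ℓ) * r (κ ℓ) ^ (k + (ℓ : ℕ) + 1 + (s : ℕ))) = det (C * vandermonde r) := by
    rw [det_mul_vandermonde]
    refine sum_congr rfl fun κ _ => ?_
    rw [← det_transpose]
    congr 1
    ext ℓ s
    simp only [transpose_apply, of_apply, C]
    ring
  rw [hcasorati, hcoef]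
  exact hbound n
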